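/- Under the standing assumptions (graph conditions G1–G4 and potential conditions A1–A2), for any λ > 1 and p > 2, the infimum m_λ of J_λ over the Nehari manifold N_λ is achieved by some u_λ ∈ N_λ. -/

import Mathlib

open Filter Topology

structure GraphData (V : Type*) where
  ω : V → V → ℝ
  μ : V → ℝ
  sym : ∀ x y, ω x y = ω y x
  nonneg : ∀ x y, 0 ≤ ω x y
  loopless : ∀ x, ω x x = 0
  locfin : ∀ x, {y | ω x y ≠ 0}.Finite
  μpos : ∀ x, 0 < μ x

variable {V : Type*}

noncomputable def GraphData.lap (g : GraphData V) (u : V → ℝ) (x : V) : ℝ :=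
  (1 / g.μ x) * ∑' y, g.ω x y * (u y - u x)

noncomputable def GraphData.grad (g : GraphData V) (u v : V → ℝ) (x : V) : ℝ :=
  (1 / (2 * g.μ x)) * ∑' y, g.ω x y * (u y - u x) * (v y - v x)

noncomputable def GraphData.integral (g : GraphData V) (f : V → ℝ) : ℝ :=
  ∑' x, g.μ x * f x

def GraphData.G (g : GraphData V) : SimpleGraph V where
  Adj x y := 0 < g.ω x y
  symm := ⟨by intro x y h; rwa [g.sym y x]⟩
  loopless := ⟨by intro x h; simp [g.loopless x] at h⟩

noncomputable def GraphData.enormSq (g : GraphData V) (a : V → ℝ) (lam : ℝ) (u : V → ℝ) : ℝ :=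
  ∑' x, g.μ x * ((g.lap u x) ^ 2 + g.grad u u x + (lam * a x + 1) * (u x) ^ 2)

def GraphData.memE (g : GraphData V) (a : V → ℝ) (lam : ℝ) (u : V → ℝ) : Prop :=
  Summable fun x => g.μ x * ((g.lap u x) ^ 2 + g.grad u u x + (lam * a x + 1) * (u x) ^ 2)

noncomputable def GraphData.lpInt (g : GraphData V) (p : ℝ) (u : V → ℝ) : ℝ :=
  ∑' x, g.μ x * |u x| ^ p

noncomputable def GraphData.Jlam (g : GraphData V) (a : V → ℝ) (lam p : ℝ) (u : V → ℝ) : ℝ :=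
  (1 / 2) * g.enormSq a lam u - (1 / p) * g.lpInt p u

def GraphData.Nehari (g : GraphData V) (a : V → ℝ) (lam p : ℝ) : Set (V → ℝ) :=
  {u | u ≠ 0 ∧ g.memE a lam u ∧ g.enormSq a lam u = g.lpInt p u}

noncomputable def GraphData.Jderiv (g : GraphData V) (a : V → ℝ) (lam p : ℝ) (u φ : V → ℝ) : ℝ :=
  (∑' x, g.μ x * (g.lap u x * g.lap φ x + g.grad u φ x + (lam * a x + 1) * u x * φ x))
    - ∑' x, g.μ x * (|u x| ^ (p - 2) * u x * φ x)

def GraphData.bdry (g : GraphData V) (Ω : Set V) : Set V :=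
  {y | y ∉ Ω ∧ ∃ x ∈ Ω, 0 < g.ω x y}

noncomputable def GraphData.hnormSq (g : GraphData V) (Ω : Set V) (u : V → ℝ) : ℝ :=
  (∑' x : ↥(Ω ∪ g.bdry Ω), g.μ x * ((g.lap u x) ^ 2 + g.grad u u x))
    + ∑' x : Ω, g.μ x * (u x) ^ 2

noncomputable def GraphData.lpIntO (g : GraphData V) (Ω : Set V) (p : ℝ) (u : V → ℝ) : ℝ :=
  ∑' x : Ω, g.μ x * |u x| ^ p

noncomputable def GraphData.JOmega (g : GraphData V) (Ω : Set V) (p : ℝ) (u : V → ℝ) : ℝ :=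
  (1 / 2) * g.hnormSq Ω u - (1 / p) * g.lpIntO Ω p u

def GraphData.memH (g : GraphData V) (Ω : Set V) (u : V → ℝ) : Prop :=
  ∀ x ∉ Ω, u x = 0

def GraphData.NehariO (g : GraphData V) (Ω : Set V) (p : ℝ) : Set (V → ℝ) :=
  {u | u ≠ 0 ∧ g.memH Ω u ∧ g.hnormSq Ω u = g.lpIntO Ω p u}

noncomputable def GraphData.JderivO (g : GraphData V) (Ω : Set V) (p : ℝ) (u φ : V → ℝ) : ℝ :=
  (∑' x : ↥(Ω ∪ g.bdry Ω), g.μ x * (g.lap u x * g.lap φ x + g.grad u φ x))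
    + (∑' x : Ω, g.μ x * (u x * φ x))
    - ∑' x : Ω, g.μ x * (|u x| ^ (p - 2) * u x * φ x)

/-!
On the Nehari manifold `J_λ(u) = (1/2 - 1/p) ‖u‖²`, so it suffices to minimise `‖u‖²` there.
Since `μ ≥ μ_min`, `|u(x)|² ≤ ‖u‖² / μ_min`, whence `∫ |u|^p ≤ (‖u‖²/μ_min)^{(p-2)/2} ‖u‖²` and the
infimum `m` is at least `μ_min > 0`. A minimising sequence is uniformly bounded, so (`V` being
countable) a subsequence converges pointwise to some `u`; Fatou gives `‖u‖² ≤ m`, and because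
`a → ∞` the sequence is tight in `L^p`, so `∫ |u|^p = m`. Thus `u ≠ 0` and `‖u‖² ≤ ∫ |u|^p`, so
some `t u` with `0 < t ≤ 1` lies on the Nehari manifold, with `‖t u‖² ≤ m`.
-/

section Sequences

variable {ι : Type*}

lemma exists_subseq_tendsto_pi_of_abs_le [Countable ι] {w : ℕ → ι → ℝ} {M : ℝ}
    (hw : ∀ n x, |w n x| ≤ M) :
    ∃ u : ι → ℝ, ∃ φ : ℕ → ℕ, StrictMono φ ∧
      ∀ x, Tendsto (fun n => w (φ n) x) atTop (𝓝 (u x)) := by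
  obtain ⟨u, -, φ, hφ, hlim⟩ :=
    (isCompact_univ_pi fun _ => isCompact_Icc (a := -M) (b := M)).isSeqCompact
      fun n => Set.mem_univ_pi.2 fun x => abs_le.1 (hw n x)
  exact ⟨u, φ, hφ, tendsto_pi_nhds.1 hlim⟩

lemma summable_and_tsum_le_of_tendsto {f : ℕ → ι → ℝ} {h : ι → ℝ} {m : ℝ}
    (hf : ∀ n x, 0 ≤ f n x) (hfs : ∀ n, Summable (f n))
    (hpt : ∀ x, Tendsto (fun n => f n x) atTop (𝓝 (h x)))
    (hm : Tendsto (fun n => ∑' x, f n x) atTop (𝓝 m)) :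
    Summable h ∧ ∑' x, h x ≤ m := by
  have hh : 0 ≤ h := fun x => ge_of_tendsto' (hpt x) (hf · x)
  have hsum : ∀ F : Finset ι, ∑ x ∈ F, h x ≤ m := fun F =>
    le_of_tendsto_of_tendsto' (tendsto_finsetSum F fun x _ => hpt x) hm
      fun n => (hfs n).sum_le_tsum F fun x _ => hf n x
  exact ⟨summable_of_sum_le hh hsum, Real.tsum_le_of_sum_le hh hsum⟩

lemma tendsto_tsum_of_tendsto_of_tight {f : ℕ → ι → ℝ} {h : ι → ℝ}
    (hpt : ∀ x, Tendsto (fun n => f n x) atTop (𝓝 (h x)))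
    (htight : ∀ ε > 0, ∃ F : Finset ι,
      (∀ n, |∑' x, f n x - ∑ x ∈ F, f n x| ≤ ε) ∧ |∑' x, h x - ∑ x ∈ F, h x| ≤ ε) :
    Tendsto (fun n => ∑' x, f n x) atTop (𝓝 (∑' x, h x)) := by
  rw [Metric.tendsto_atTop]
  intro ε hε
  obtain ⟨F, hfF, hhF⟩ := htight (ε / 4) (by positivity)
  obtain ⟨N, hN⟩ := Metric.tendsto_atTop.1
    (tendsto_finsetSum F fun x _ => hpt x) (ε / 4) (by positivity)
  refine ⟨N, fun n hn => ?_⟩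
  have hFn := hN n hn
  rw [Real.dist_eq] at hFn ⊢
  have h₁ := abs_sub_le (∑' x, f n x) (∑ x ∈ F, f n x) (∑' x, h x)
  have h₂ := abs_sub_le (∑ x ∈ F, f n x) (∑ x ∈ F, h x) (∑' x, h x)
  rw [abs_sub_comm (∑ x ∈ F, h x)] at h₂
  linarith [hfF n]

end Sequences

namespace GraphData

variable (g : GraphData V)

lemma finite_setOf_dist_le (hconn : g.G.Connected) (x₀ : V) (n : ℕ) :
    {x | g.G.dist x x₀ ≤ n}.Finite := by
  induction n with
  | zero =>
    refine (Set.finite_singleton x₀).subset fun x hx => ?_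
    exact hconn.dist_eq_zero_iff.mp (Nat.le_zero.mp hx)
  | succ n ih =>
    refine (ih.union (ih.biUnion fun y _ => g.locfin y)).subset fun x hx => ?_
    rcases Nat.le_succ_iff.mp hx with hle | hd
    · exact Or.inl hle
    obtain ⟨w, hw⟩ := (hconn.preconnected x x₀).exists_walk_length_eq_dist
    cases w with
    | nil => simp_all
    | @cons _ y _ hadj q =>
      have hy : g.G.dist y x₀ ≤ n := by
        have := g.G.dist_le q
        simp only [SimpleGraph.Walk.length_cons, hd] at hw
        omega
      have hyx : g.ω y x ≠ 0 := by rw [g.sym]; exact (show 0 < g.ω x y from hadj).ne'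
      exact Or.inr (Set.mem_biUnion hy hyx)

lemma countable_of_connected (hconn : g.G.Connected) (x₀ : V) : Countable V := by
  rw [← Set.countable_univ_iff]
  refine (Set.countable_iUnion fun n => (g.finite_setOf_dist_le hconn x₀ n).countable).mono ?_
  exact fun x _ => Set.mem_iUnion.mpr ⟨g.G.dist x x₀, by simp⟩

lemma lap_eq_sum (u : V → ℝ) (x : V) :
    g.lap u x = 1 / g.μ x * ∑ y ∈ (g.locfin x).toFinset, g.ω x y * (u y - u x) := by
  rw [lap, tsum_eq_sum (s := (g.locfin x).toFinset) fun y hy => by simp_all]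

lemma grad_eq_sum (u v : V → ℝ) (x : V) :
    g.grad u v x =
      1 / (2 * g.μ x) * ∑ y ∈ (g.locfin x).toFinset, g.ω x y * (u y - u x) * (v y - v x) := by
  rw [grad, tsum_eq_sum (s := (g.locfin x).toFinset) fun y hy => by simp_all]

lemma lap_smul (t : ℝ) (u : V → ℝ) (x : V) : g.lap (t • u) x = t * g.lap u x := by
  simp only [lap_eq_sum, Pi.smul_apply, smul_eq_mul, Finset.mul_sum]
  exact Finset.sum_congr rfl fun y _ => by ring

lemma grad_smul (t : ℝ) (u : V → ℝ) (x : V) :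
    g.grad (t • u) (t • u) x = t ^ 2 * g.grad u u x := by
  simp only [grad_eq_sum, Pi.smul_apply, smul_eq_mul, Finset.mul_sum]
  exact Finset.sum_congr rfl fun y _ => by ring

lemma grad_self_nonneg (u : V → ℝ) (x : V) : 0 ≤ g.grad u u x :=
  mul_nonneg (by have := g.μpos x; positivity) <| tsum_nonneg fun y => by
    rw [mul_assoc]; exact mul_nonneg (g.nonneg x y) (mul_self_nonneg _)

lemma tendsto_lap {w : ℕ → V → ℝ} {u : V → ℝ}
    (hw : ∀ y, Tendsto (fun n => w n y) atTop (𝓝 (u y))) (x : V) :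
    Tendsto (fun n => g.lap (w n) x) atTop (𝓝 (g.lap u x)) := by
  simp only [lap_eq_sum]
  exact tendsto_const_nhds.mul
    (tendsto_finsetSum _ fun y _ => tendsto_const_nhds.mul ((hw y).sub (hw x)))

lemma tendsto_grad {w : ℕ → V → ℝ} {u : V → ℝ}
    (hw : ∀ y, Tendsto (fun n => w n y) atTop (𝓝 (u y))) (x : V) :
    Tendsto (fun n => g.grad (w n) (w n) x) atTop (𝓝 (g.grad u u x)) := by
  simp only [grad_eq_sum]
  exact tendsto_const_nhds.mul (tendsto_finsetSum _ fun y _ =>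
    (tendsto_const_nhds.mul ((hw y).sub (hw x))).mul ((hw y).sub (hw x)))

noncomputable def energyDensity (a : V → ℝ) (lam : ℝ) (u : V → ℝ) (x : V) : ℝ :=
  g.μ x * ((g.lap u x) ^ 2 + g.grad u u x + (lam * a x + 1) * (u x) ^ 2)

variable {g} {a : V → ℝ} {lam p : ℝ}

lemma enormSq_eq_tsum (u : V → ℝ) : g.enormSq a lam u = ∑' x, g.energyDensity a lam u x := rfl

lemma memE_iff_summable {u : V → ℝ} : g.memE a lam u ↔ Summable (g.energyDensity a lam u) :=
  Iff.rfl

lemma tendsto_energyDensity {w : ℕ → V → ℝ} {u : V → ℝ}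
    (hw : ∀ y, Tendsto (fun n => w n y) atTop (𝓝 (u y))) (x : V) :
    Tendsto (fun n => g.energyDensity a lam (w n) x) atTop (𝓝 (g.energyDensity a lam u x)) :=
  tendsto_const_nhds.mul ((((g.tendsto_lap hw x).pow 2).add (g.tendsto_grad hw x)).add
    (tendsto_const_nhds.mul ((hw x).pow 2)))

lemma energyDensity_smul (t : ℝ) (u : V → ℝ) (x : V) :
    g.energyDensity a lam (t • u) x = t ^ 2 * g.energyDensity a lam u x := by
  rw [energyDensity, energyDensity, lap_smul, grad_smul]
  simp only [Pi.smul_apply, smul_eq_mul]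
  ring

lemma enormSq_smul (t : ℝ) (u : V → ℝ) :
    g.enormSq a lam (t • u) = t ^ 2 * g.enormSq a lam u := by
  simp only [enormSq_eq_tsum, energyDensity_smul, tsum_mul_left]

lemma memE_smul (t : ℝ) {u : V → ℝ} (hu : g.memE a lam u) : g.memE a lam (t • u) := by
  rw [memE_iff_summable, funext (energyDensity_smul t u)]
  exact hu.mul_left (t ^ 2)

lemma lpInt_smul {t : ℝ} (ht : 0 ≤ t) (u : V → ℝ) :
    g.lpInt p (t • u) = t ^ p * g.lpInt p u := by
  simp only [lpInt, ← tsum_mul_left, Pi.smul_apply, smul_eq_mul, abs_mul, abs_of_nonneg ht]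
  exact tsum_congr fun x => by rw [Real.mul_rpow ht (abs_nonneg _)]; ring

lemma mul_sq_le_energyDensity {T : ℝ} {u : V → ℝ} {x : V} (hT : T ≤ lam * a x + 1) :
    T * (g.μ x * u x ^ 2) ≤ g.energyDensity a lam u x := by
  have := g.grad_self_nonneg u x
  have := g.μpos x
  unfold energyDensity
  nlinarith [sq_nonneg (g.lap u x), mul_le_mul_of_nonneg_right hT (sq_nonneg (u x))]

lemma energyDensity_nonneg (hlam : 0 ≤ lam) (ha : ∀ x, 0 ≤ a x) (u : V → ℝ) (x : V) :
    0 ≤ g.energyDensity a lam u x := by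
  simpa using mul_sq_le_energyDensity (u := u) (T := 0) (by have := ha x; positivity)

lemma mu_mul_sq_le_energyDensity (hlam : 0 ≤ lam) (ha : ∀ x, 0 ≤ a x) (u : V → ℝ) (x : V) :
    g.μ x * u x ^ 2 ≤ g.energyDensity a lam u x := by
  have := mul_nonneg hlam (ha x)
  simpa using mul_sq_le_energyDensity (u := u) (T := 1) (by linarith)

lemma energyDensity_le_enormSq (hlam : 0 ≤ lam) (ha : ∀ x, 0 ≤ a x) {u : V → ℝ}
    (hu : g.memE a lam u) (x : V) : g.energyDensity a lam u x ≤ g.enormSq a lam u :=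
  hu.le_tsum x fun y _ => energyDensity_nonneg hlam ha u y

lemma enormSq_nonneg (hlam : 0 ≤ lam) (ha : ∀ x, 0 ≤ a x) (u : V → ℝ) :
    0 ≤ g.enormSq a lam u :=
  tsum_nonneg (energyDensity_nonneg hlam ha u)

lemma enormSq_pos (hlam : 0 ≤ lam) (ha : ∀ x, 0 ≤ a x) {u : V → ℝ} (hu : g.memE a lam u)
    (hu0 : u ≠ 0) : 0 < g.enormSq a lam u := by
  obtain ⟨x, hx⟩ := Function.ne_iff.mp hu0
  calc 0 < g.μ x * u x ^ 2 := by have := g.μpos x; simp only [Pi.zero_apply] at hx; positivity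
    _ ≤ g.energyDensity a lam u x := mu_mul_sq_le_energyDensity hlam ha u x
    _ ≤ g.enormSq a lam u := energyDensity_le_enormSq hlam ha hu x

lemma abs_rpow_le_of_enormSq_le {μmin K q : ℝ} (hμmin : 0 < μmin) (hμ : ∀ x, μmin ≤ g.μ x)
    (hlam : 0 ≤ lam) (ha : ∀ x, 0 ≤ a x) {u : V → ℝ} (hu : g.memE a lam u)
    (hK : g.enormSq a lam u ≤ K) (hq : 0 ≤ q) (x : V) :
    |u x| ^ q ≤ (K / μmin) ^ (q / 2) := by
  have hsq : u x ^ 2 ≤ K / μmin := by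
    rw [le_div_iff₀' hμmin]
    calc μmin * u x ^ 2 ≤ g.μ x * u x ^ 2 := by gcongr; exact hμ x
      _ ≤ g.enormSq a lam u :=
        (mu_mul_sq_le_energyDensity hlam ha u x).trans (energyDensity_le_enormSq hlam ha hu x)
      _ ≤ K := hK
  calc |u x| ^ q = (u x ^ 2) ^ (q / 2) := by
        rw [← sq_abs, ← Real.rpow_natCast, ← Real.rpow_mul (abs_nonneg _)]
        ring_nf
    _ ≤ (K / μmin) ^ (q / 2) := Real.rpow_le_rpow (sq_nonneg _) hsq (by linarith)

lemma abs_rpow_eq_mul_sq (hp : p ≠ 0) (t : ℝ) : |t| ^ p = |t| ^ (p - 2) * t ^ 2 := by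
  rcases eq_or_ne t 0 with rfl | ht
  · simp [Real.zero_rpow hp]
  · rw [← sq_abs t, ← Real.rpow_two, ← Real.rpow_add (abs_pos.2 ht)]
    norm_num

lemma mul_mu_mul_abs_rpow_le (hp : p ≠ 0) {u : V → ℝ} {x : V} {T c : ℝ} (hT0 : 0 ≤ T)
    (hT : T ≤ lam * a x + 1) (hc : |u x| ^ (p - 2) ≤ c) :
    T * (g.μ x * |u x| ^ p) ≤ c * g.energyDensity a lam u x := by
  rw [abs_rpow_eq_mul_sq hp, show T * (g.μ x * (|u x| ^ (p - 2) * u x ^ 2))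
    = |u x| ^ (p - 2) * (T * (g.μ x * u x ^ 2)) by ring]
  have := g.μpos x
  exact mul_le_mul hc (mul_sq_le_energyDensity hT) (by positivity)
    ((Real.rpow_nonneg (abs_nonneg _) _).trans hc)

lemma summable_mu_mul_abs_rpow (hlam : 0 ≤ lam) (ha : ∀ x, 0 ≤ a x) (hp : p ≠ 0) {u : V → ℝ}
    (hu : g.memE a lam u) {c : ℝ} (hc : ∀ x, |u x| ^ (p - 2) ≤ c) :
    Summable fun x => g.μ x * |u x| ^ p :=
  ((memE_iff_summable.mp hu).mul_left c).of_nonneg_of_le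
    (fun x => by have := g.μpos x; positivity) fun x => by
      have := mul_nonneg hlam (ha x)
      simpa using mul_mu_mul_abs_rpow_le hp zero_le_one (by linarith) (hc x)

lemma sum_le_lpInt (hlam : 0 ≤ lam) (ha : ∀ x, 0 ≤ a x) (hp : p ≠ 0) {u : V → ℝ}
    (hu : g.memE a lam u) {c : ℝ} (hc : ∀ x, |u x| ^ (p - 2) ≤ c) (F : Finset V) :
    ∑ x ∈ F, g.μ x * |u x| ^ p ≤ g.lpInt p u :=
  (summable_mu_mul_abs_rpow hlam ha hp hu hc).sum_le_tsum F fun x _ => by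
    have := g.μpos x; positivity

lemma mul_lpInt_sub_sum_le (hlam : 0 ≤ lam) (ha : ∀ x, 0 ≤ a x) (hp : p ≠ 0) {u : V → ℝ}
    (hu : g.memE a lam u) {c : ℝ} (hc : ∀ x, |u x| ^ (p - 2) ≤ c) {T : ℝ} (hT : 0 ≤ T)
    {F : Finset V} (hF : ∀ x ∉ F, T ≤ lam * a x + 1) :
    T * (g.lpInt p u - ∑ x ∈ F, g.μ x * |u x| ^ p) ≤ c * g.enormSq a lam u := by
  have hsum := summable_mu_mul_abs_rpow hlam ha hp hu hc
  have hdens := memE_iff_summable.mp hu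
  have hdens_nonneg : ∀ x, 0 ≤ c * g.energyDensity a lam u x := fun x =>
    mul_nonneg ((Real.rpow_nonneg (abs_nonneg _) _).trans (hc x))
      (energyDensity_nonneg hlam ha u x)
  rw [lpInt, ← hsum.sum_add_tsum_compl (s := F), add_sub_cancel_left, ← tsum_mul_left,
    enormSq_eq_tsum, ← tsum_mul_left]
  calc ∑' x : ↑(↑F : Set V)ᶜ, T * (g.μ x * |u x| ^ p)
      ≤ ∑' x : ↑(↑F : Set V)ᶜ, c * g.energyDensity a lam u x :=
        (hsum.mul_left T).subtype _ |>.tsum_le_tsum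
          (fun x => mul_mu_mul_abs_rpow_le hp hT (hF x x.2) (hc x))
          ((hdens.mul_left c).subtype _)
    _ ≤ ∑' x, c * g.energyDensity a lam u x :=
        Summable.tsum_subtype_le _ _ hdens_nonneg (hdens.mul_left c)

lemma Jlam_eq_of_mem_Nehari {u : V → ℝ} (hu : u ∈ g.Nehari a lam p) :
    g.Jlam a lam p u = (1 / 2 - 1 / p) * g.enormSq a lam u := by
  rw [Jlam, ← hu.2.2]
  ring

/-- `t = (‖u‖² / ∫|u|^p)^{1/(p-2)}` is where the fibering map `t ↦ J_λ(t u)` is maximal. -/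
lemma rpow_smul_mem_Nehari (hp : 2 < p) {u : V → ℝ} (hu : g.memE a lam u) (hu0 : u ≠ 0)
    (hA : 0 < g.enormSq a lam u) (hB : 0 < g.lpInt p u) :
    (g.enormSq a lam u / g.lpInt p u) ^ (1 / (p - 2)) • u ∈ g.Nehari a lam p := by
  have htp2 : ((g.enormSq a lam u / g.lpInt p u) ^ (1 / (p - 2))) ^ (p - 2)
      = g.enormSq a lam u / g.lpInt p u := by
    rw [← Real.rpow_mul (div_pos hA hB).le, one_div_mul_cancel (by linarith), Real.rpow_one]
  set t := (g.enormSq a lam u / g.lpInt p u) ^ (1 / (p - 2))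
  have ht : 0 < t := Real.rpow_pos_of_pos (div_pos hA hB) _
  have htp : t ^ p = g.enormSq a lam u / g.lpInt p u * t ^ 2 := by
    rw [← htp2, ← Real.rpow_two, ← Real.rpow_add ht, sub_add_cancel]
  refine ⟨smul_ne_zero ht.ne' hu0, memE_smul t hu, ?_⟩
  rw [enormSq_smul, lpInt_smul ht.le, htp]
  field_simp

lemma exists_smul_mem_Nehari_of_enormSq_le_lpInt (hp : 2 < p) {u : V → ℝ}
    (hu : g.memE a lam u) (hu0 : u ≠ 0) (hA : 0 < g.enormSq a lam u)
    (hAB : g.enormSq a lam u ≤ g.lpInt p u) :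
    ∃ t ∈ Set.Ioc (0 : ℝ) 1, t • u ∈ g.Nehari a lam p := by
  have hB := hA.trans_le hAB
  refine ⟨_, ⟨Real.rpow_pos_of_pos (div_pos hA hB) _, ?_⟩,
    rpow_smul_mem_Nehari hp hu hu0 hA hB⟩
  exact Real.rpow_le_one (div_nonneg hA.le hB.le) ((div_le_one hB).2 hAB)
    (one_div_nonneg.2 (by linarith))

lemma memE_of_finite_support {u : V → ℝ} (hs : (Function.support u).Finite) :
    g.memE a lam u := by
  classical
  rw [memE_iff_summable]
  refine summable_of_ne_finset_zero
    (s := hs.toFinset ∪ hs.toFinset.biUnion fun y => (g.locfin y).toFinset) fun x hx => ?_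
  simp only [Finset.mem_union, Finset.mem_biUnion, Set.Finite.mem_toFinset, Function.mem_support,
    not_or, not_exists, not_and, not_not] at hx
  obtain ⟨hux, hnbr⟩ := hx
  have hterm : ∀ y, g.ω x y * (u y - u x) = 0 := fun y => by
    by_cases huy : u y = 0
    · simp [huy, hux]
    · rw [g.sym, show g.ω y x = 0 from not_not.mp (hnbr y huy), zero_mul]
  have hlap : g.lap u x = 0 := by simp [lap, hterm]
  have hgrad : g.grad u u x = 0 := by simp [grad, hterm]
  simp [energyDensity, hlap, hgrad, hux]

lemma Nehari_nonempty [Nonempty V] (hlam : 0 ≤ lam) (ha : ∀ x, 0 ≤ a x) (hp : 2 < p) :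
    (g.Nehari a lam p).Nonempty := by
  classical
  obtain ⟨x₀⟩ := ‹Nonempty V›
  set δ : V → ℝ := Pi.single x₀ 1
  have hδ0 : δ ≠ 0 := by simp [δ]
  have hδE : g.memE a lam δ :=
    memE_of_finite_support ((Set.finite_singleton x₀).subset Pi.support_single_subset)
  have hB : g.lpInt p δ = g.μ x₀ := by
    have hp0 : p ≠ 0 := by linarith
    rw [lpInt, tsum_eq_single x₀ fun y hy => by simp [δ, hy, Real.zero_rpow hp0]]
    simp [δ]
  exact ⟨_, rpow_smul_mem_Nehari hp hδE hδ0 (enormSq_pos hlam ha hδE hδ0)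
    (hB ▸ g.μpos x₀)⟩

lemma le_enormSq_of_mem_Nehari {μmin : ℝ} (hμmin : 0 < μmin) (hμ : ∀ x, μmin ≤ g.μ x)
    (hlam : 0 ≤ lam) (ha : ∀ x, 0 ≤ a x) (hp : 2 < p) {u : V → ℝ}
    (hu : u ∈ g.Nehari a lam p) : μmin ≤ g.enormSq a lam u := by
  obtain ⟨hu0, huE, hAB⟩ := hu
  set A := g.enormSq a lam u
  have hA : 0 < A := enormSq_pos hlam ha huE hu0
  set c := (A / μmin) ^ ((p - 2) / 2)
  have hc : ∀ x, |u x| ^ (p - 2) ≤ c :=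
    abs_rpow_le_of_enormSq_le hμmin hμ hlam ha huE le_rfl (by linarith)
  have hBc : g.lpInt p u ≤ c * A := by
    simpa using mul_lpInt_sub_sum_le hlam ha (by linarith) huE hc zero_le_one (F := ∅)
      fun x _ => by have := mul_nonneg hlam (ha x); linarith
  have hc1 : 1 ≤ c := le_of_mul_le_mul_right (by linarith) hA
  by_contra! hlt
  have : c < 1 := Real.rpow_lt_one (by positivity) ((div_lt_one hμmin).2 hlt) (by linarith)
  linarith

/-- As `a → ∞`, the weight `λ a + 1` is large off a finite ball: bounded sets of `E_λ` are
uniformly tight in `L^p`, which is the compactness of `E_λ ↪ L^p`. -/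
lemma exists_finset_abs_lpInt_sub_sum_le (hconn : g.G.Connected) {x₀ : V}
    (hainf : ∀ M : ℝ, ∃ R : ℕ, ∀ x, R ≤ g.G.dist x x₀ → M ≤ a x) (hlam : 1 ≤ lam)
    (ha : ∀ x, 0 ≤ a x) {μmin : ℝ} (hμmin : 0 < μmin) (hμ : ∀ x, μmin ≤ g.μ x)
    (hp : 2 < p) (K : ℝ) {ε : ℝ} (hε : 0 < ε) :
    ∃ F : Finset V, ∀ u, g.memE a lam u → g.enormSq a lam u ≤ K →
      |g.lpInt p u - ∑ x ∈ F, g.μ x * |u x| ^ p| ≤ ε := by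
  set c := (K / μmin) ^ ((p - 2) / 2)
  set T := max (c * K / ε) 1
  have hT : 0 < T := zero_lt_one.trans_le (le_max_right _ _)
  obtain ⟨R, hR⟩ := hainf (c * K / ε)
  refine ⟨(g.finite_setOf_dist_le hconn x₀ R).toFinset, fun u hu huK => ?_⟩
  have hlam0 : 0 ≤ lam := by linarith
  have hc : ∀ x, |u x| ^ (p - 2) ≤ c :=
    abs_rpow_le_of_enormSq_le hμmin hμ hlam0 ha hu huK (by linarith)
  have hF : ∀ x ∉ (g.finite_setOf_dist_le hconn x₀ R).toFinset, T ≤ lam * a x + 1 := by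
    intro x hx
    rw [Set.Finite.mem_toFinset, Set.mem_ofPred_eq, not_le] at hx
    have := le_mul_of_one_le_left (ha x) hlam
    exact max_le (by linarith [hR x hx.le]) (by linarith [ha x])
  have htail := mul_lpInt_sub_sum_le hlam0 ha (by linarith) hu hc hT.le hF
  have hK : 0 ≤ K := (enormSq_nonneg hlam0 ha u).trans huK
  have hc0 : 0 ≤ c := Real.rpow_nonneg (div_nonneg hK hμmin.le) _
  have hcK : c * K ≤ T * ε := (div_le_iff₀ hε).1 (le_max_left _ _)
  rw [abs_of_nonneg (sub_nonneg.2 (sum_le_lpInt hlam0 ha (by linarith) hu hc _))]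
  exact le_of_mul_le_mul_left (htail.trans ((mul_le_mul_of_nonneg_left huK hc0).trans hcK)) hT

lemma tendsto_lpInt_of_tendsto (hconn : g.G.Connected) {x₀ : V}
    (hainf : ∀ M : ℝ, ∃ R : ℕ, ∀ x, R ≤ g.G.dist x x₀ → M ≤ a x) (hlam : 1 ≤ lam)
    (ha : ∀ x, 0 ≤ a x) {μmin : ℝ} (hμmin : 0 < μmin) (hμ : ∀ x, μmin ≤ g.μ x)
    (hp : 2 < p) {K : ℝ} {w : ℕ → V → ℝ} {u : V → ℝ} (hw : ∀ n, g.memE a lam (w n))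
    (hwK : ∀ n, g.enormSq a lam (w n) ≤ K) (hu : g.memE a lam u)
    (huK : g.enormSq a lam u ≤ K) (hpt : ∀ x, Tendsto (fun n => w n x) atTop (𝓝 (u x))) :
    Tendsto (fun n => g.lpInt p (w n)) atTop (𝓝 (g.lpInt p u)) := by
  refine tendsto_tsum_of_tendsto_of_tight
    (fun x => tendsto_const_nhds.mul ((hpt x).abs.rpow_const (Or.inr (by linarith))))
    fun ε hε => ?_
  obtain ⟨F, hF⟩ := g.exists_finset_abs_lpInt_sub_sum_le hconn hainf hlam ha hμmin hμ hp K hε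
  exact ⟨F, fun n => hF _ (hw n) (hwK n), hF u hu huK⟩

lemma exists_lpInt_eq_of_tendsto_enormSq (hconn : g.G.Connected) {x₀ : V}
    (hainf : ∀ M : ℝ, ∃ R : ℕ, ∀ x, R ≤ g.G.dist x x₀ → M ≤ a x) (hlam : 1 ≤ lam)
    (ha : ∀ x, 0 ≤ a x) {μmin : ℝ} (hμmin : 0 < μmin) (hμ : ∀ x, μmin ≤ g.μ x)
    (hp : 2 < p) {w : ℕ → V → ℝ} {m K : ℝ} (hw : ∀ n, w n ∈ g.Nehari a lam p)
    (hwK : ∀ n, g.enormSq a lam (w n) ≤ K)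
    (hm : Tendsto (fun n => g.enormSq a lam (w n)) atTop (𝓝 m)) :
    ∃ u, g.memE a lam u ∧ g.enormSq a lam u ≤ m ∧ g.lpInt p u = m := by
  have := g.countable_of_connected hconn x₀
  have hlam0 : 0 ≤ lam := by linarith
  obtain ⟨u, φ, hφ, hpt⟩ := exists_subseq_tendsto_pi_of_abs_le fun n x => by
    simpa using abs_rpow_le_of_enormSq_le hμmin hμ hlam0 ha (hw n).2.1 (hwK n) zero_le_one x
  have hmφ := hm.comp hφ.tendsto_atTop
  obtain ⟨huE, hum⟩ := summable_and_tsum_le_of_tendsto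
    (fun n => energyDensity_nonneg hlam0 ha _) (fun n => memE_iff_summable.1 (hw (φ n)).2.1)
    (tendsto_energyDensity hpt) hmφ
  have hlp := g.tendsto_lpInt_of_tendsto hconn hainf hlam ha hμmin hμ hp
    (fun n => (hw (φ n)).2.1) (fun n => hwK (φ n)) huE (hum.trans (le_of_tendsto' hm hwK)) hpt
  exact ⟨u, huE, hum, tendsto_nhds_unique hlp (hmφ.congr fun n => (hw (φ n)).2.2)⟩

theorem exists_isMinOn_enormSq_Nehari (hconn : g.G.Connected) {x₀ : V}
    (hainf : ∀ M : ℝ, ∃ R : ℕ, ∀ x, R ≤ g.G.dist x x₀ → M ≤ a x) (hlam : 1 ≤ lam)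
    (ha : ∀ x, 0 ≤ a x) {μmin : ℝ} (hμmin : 0 < μmin) (hμ : ∀ x, μmin ≤ g.μ x)
    (hp : 2 < p) :
    ∃ u ∈ g.Nehari a lam p, IsMinOn (g.enormSq a lam) (g.Nehari a lam p) u := by
  have hlam0 : 0 ≤ lam := by linarith
  have : Nonempty V := ⟨x₀⟩
  set S := g.enormSq a lam '' g.Nehari a lam p
  have hSne : S.Nonempty := (g.Nehari_nonempty hlam0 ha hp).image _
  have hSlb : ∀ s ∈ S, μmin ≤ s :=
    Set.forall_mem_image.2 fun _ hv => le_enormSq_of_mem_Nehari hμmin hμ hlam0 ha hp hv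
  have hSbdd : BddBelow S := ⟨μmin, hSlb⟩
  obtain ⟨s, hs_anti, hs_lim, hsS⟩ := exists_seq_tendsto_sInf hSne hSbdd
  choose w hwN hws using hsS
  obtain ⟨u, huE, hum, hup⟩ :=
    g.exists_lpInt_eq_of_tendsto_enormSq hconn hainf hlam ha hμmin hμ hp hwN
      (fun n => (hws n).trans_le (hs_anti (Nat.zero_le n))) (by simpa only [hws] using hs_lim)
  have hu0 : u ≠ 0 := by
    rintro rfl
    simp [lpInt, Real.zero_rpow (by linarith : p ≠ 0)] at hup
    linarith [le_csInf hSne hSlb]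
  obtain ⟨t, ⟨ht0, ht1⟩, htN⟩ := exists_smul_mem_Nehari_of_enormSq_le_lpInt hp huE hu0
    (enormSq_pos hlam0 ha huE hu0) (hup ▸ hum)
  refine ⟨t • u, htN, fun v hv => ?_⟩
  calc g.enormSq a lam (t • u) = t ^ 2 * g.enormSq a lam u := enormSq_smul t u
    _ ≤ g.enormSq a lam u :=
      mul_le_of_le_one_left (enormSq_nonneg hlam0 ha u) (pow_le_one₀ ht0.le ht1)
    _ ≤ sInf S := hum
    _ ≤ g.enormSq a lam v := csInf_le hSbdd (Set.mem_image_of_mem _ hv)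

end GraphData

theorem stmt8_general (g : GraphData V) (μmin lam p : ℝ) (hμmin : 0 < μmin)
    (hμ : ∀ x, μmin ≤ g.μ x) (hconn : g.G.Connected)
    (a : V → ℝ) (ha : ∀ x, 0 ≤ a x)
    (x₀ : V) (hainf : ∀ M : ℝ, ∃ R : ℕ, ∀ x, R ≤ g.G.dist x x₀ → M ≤ a x)
    (hlam : 1 < lam) (hp : 2 < p) :
    ∃ u ∈ g.Nehari a lam p, ∀ v ∈ g.Nehari a lam p,
      g.Jlam a lam p u ≤ g.Jlam a lam p v := by
  obtain ⟨u, hu, hmin⟩ := g.exists_isMinOn_enormSq_Nehari hconn hainf hlam.le ha hμmin hμ hp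
  refine ⟨u, hu, fun v hv => ?_⟩
  rw [GraphData.Jlam_eq_of_mem_Nehari hu, GraphData.Jlam_eq_of_mem_Nehari hv]
  have : 1 / p ≤ 1 / 2 := one_div_le_one_div_of_le two_pos hp.le
  exact mul_le_mul_of_nonneg_left (hmin hv) (by linarith)

/-- m_λ is achieved on the Nehari manifold. -/
theorem stmt8 (g : GraphData V) (μmin C lam p : ℝ) (hμmin : 0 < μmin)
    (hμ : ∀ x, μmin ≤ g.μ x) (hω : ∀ x, ∑' y, g.ω x y ≤ C) (hconn : g.G.Connected)
    (a : V → ℝ) (ha : ∀ x, 0 ≤ a x)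
    (hΩne : {x | a x = 0}.Nonempty)
    (hΩbd : ∃ D : ℕ, ∀ x ∈ {x | a x = 0}, ∀ y ∈ {x | a x = 0}, g.G.dist x y ≤ D)
    (hΩconn : (g.G.induce {x | a x = 0}).Connected)
    (x₀ : V) (hainf : ∀ M : ℝ, ∃ R : ℕ, ∀ x, R ≤ g.G.dist x x₀ → M ≤ a x)
    (hlam : 1 < lam) (hp : 2 < p) :
    ∃ u ∈ g.Nehari a lam p, ∀ v ∈ g.Nehari a lam p,
      g.Jlam a lam p u ≤ g.Jlam a lam p v :=
  stmt8_general g μmin lam p hμmin hμ hconn a ha x₀ hainf hlam hp
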